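/- The invariant subring e𝒮e (a ring with unit e) is generated as a C-algebra by the three elements x^s = e u^{n+1} e, y^s = e v^{n+1} e and z^s = e u v e; that is, every element of e𝒮e is a C-linear combination of finite products of x^s, y^s, z^s (the empty product being e). -/

import Mathlib

/-!
Context: `C = ℂ[s₀,…,sₙ]`, `𝒮 = C⟨u,v,g⟩/(g^{n+1} − 1, gu − ζug, gv − ζ⁻¹vg,
uv − vu − Σᵢ sᵢgⁱ)`, `ζ = e^{2πi/(n+1)}`, `e = e₀ = (1/(n+1)) Σ_{j=0}^n g^j`.
Statement 13: the invariant subring `e𝒮e` is generated as a `C`-algebra (with unit `e`)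
by `xˢ = e u^{n+1} e`, `yˢ = e v^{n+1} e`, `zˢ = e u v e`: every element of `e𝒮e` is a
`C`-linear combination of finite products of `xˢ, yˢ, zˢ` (the empty product being `e`).
-/

noncomputable section

/-- The polynomial base ring `C = ℂ[s₀,…,sₙ]`. -/
abbrev Cpoly (n : ℕ) : Type := MvPolynomial (Fin (n + 1)) ℂ

/-- `ζ = e^{2πi/(n+1)}`. -/
def zeta (n : ℕ) : ℂ := Complex.exp (2 * Real.pi * Complex.I / (n + 1))

/-- The defining relations of `𝒮 = C⟨u,v,g⟩/(g^{n+1} − 1, gu − ζug, gv − ζ⁻¹vg,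
uv − vu − Σᵢ sᵢ gⁱ)`, with `u = ι 0`, `v = ι 1`, `g = ι 2`. -/
inductive Srel (n : ℕ) : FreeAlgebra (Cpoly n) (Fin 3) → FreeAlgebra (Cpoly n) (Fin 3) → Prop
  | gpow : Srel n (FreeAlgebra.ι (Cpoly n) 2 ^ (n + 1)) 1
  | gu : Srel n (FreeAlgebra.ι (Cpoly n) 2 * FreeAlgebra.ι (Cpoly n) 0)
      (algebraMap (Cpoly n) (FreeAlgebra (Cpoly n) (Fin 3)) (MvPolynomial.C (zeta n)) *
        (FreeAlgebra.ι (Cpoly n) 0 * FreeAlgebra.ι (Cpoly n) 2))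
  | gv : Srel n (FreeAlgebra.ι (Cpoly n) 2 * FreeAlgebra.ι (Cpoly n) 1)
      (algebraMap (Cpoly n) (FreeAlgebra (Cpoly n) (Fin 3)) (MvPolynomial.C (zeta n)⁻¹) *
        (FreeAlgebra.ι (Cpoly n) 1 * FreeAlgebra.ι (Cpoly n) 2))
  | uv : Srel n (FreeAlgebra.ι (Cpoly n) 0 * FreeAlgebra.ι (Cpoly n) 1)
      (FreeAlgebra.ι (Cpoly n) 1 * FreeAlgebra.ι (Cpoly n) 0 +
        ∑ i ∈ Finset.range (n + 1),
          algebraMap (Cpoly n) (FreeAlgebra (Cpoly n) (Fin 3))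
            (MvPolynomial.X (open Fin.NatCast in (i : Fin (n + 1)))) * FreeAlgebra.ι (Cpoly n) 2 ^ i)

/-- The semi-universal noncommutative deformation
`𝒮 = C⟨u,v⟩#G/(uv − vu − Σ sᵢgⁱ)` of the twisted group algebra `S = ℂ[u,v]#G`. -/
abbrev Salg (n : ℕ) : Type := RingQuot (Srel n)

/-- `u ∈ 𝒮`. -/
def Su (n : ℕ) : Salg n := RingQuot.mkAlgHom (Cpoly n) (Srel n) (FreeAlgebra.ι (Cpoly n) 0)

/-- `v ∈ 𝒮`. -/
def Sv (n : ℕ) : Salg n := RingQuot.mkAlgHom (Cpoly n) (Srel n) (FreeAlgebra.ι (Cpoly n) 1)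

/-- `g ∈ 𝒮`. -/
def Sg (n : ℕ) : Salg n := RingQuot.mkAlgHom (Cpoly n) (Srel n) (FreeAlgebra.ι (Cpoly n) 2)

/-- The idempotent `eᵢ = (1/(n+1)) Σ_{j=0}^n ζ^{ij} g^j ∈ 𝒮` (the index `i` being read
modulo `n+1`, as `eᵢ` only depends on `i mod (n+1)` since `ζ^{n+1} = 1`). -/
def Se (n : ℕ) (i : ℕ) : Salg n :=
  algebraMap (Cpoly n) (Salg n) (MvPolynomial.C ((n + 1 : ℂ)⁻¹)) *
    ∑ j ∈ Finset.range (n + 1),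
      algebraMap (Cpoly n) (Salg n) (MvPolynomial.C (zeta n ^ (i * j))) * Sg n ^ j

-- zeta facts
lemma zeta_prim (n : ℕ) : IsPrimitiveRoot (zeta n) (n+1) := by
  have := Complex.isPrimitiveRoot_exp (n+1) (Nat.succ_ne_zero n)
  simpa [zeta] using this

lemma zeta_pow_np1 (n : ℕ) : zeta n ^ (n+1) = 1 := (zeta_prim n).pow_eq_one

lemma zeta_sum (n : ℕ) (m : ℕ) :
    (∑ j ∈ Finset.range (n+1), zeta n ^ (m*j)) = if (n+1) ∣ m then (n+1 : ℂ) else 0 := by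
  by_cases h : (n+1) ∣ m
  · obtain ⟨k, rfl⟩ := h
    rw [if_pos ⟨k, rfl⟩]
    have h1 : ∀ j, zeta n ^ ((n+1)*k*j) = 1 := fun j => by
      rw [mul_assoc, pow_mul, zeta_pow_np1, one_pow]
    simp [h1]
  · rw [if_neg h]
    have hne : zeta n ^ m ≠ 1 := fun hh => h (((zeta_prim n).pow_eq_one_iff_dvd m).1 hh)
    have h2 : ∀ j, zeta n ^ (m*j) = (zeta n ^ m)^j := fun j => by rw [pow_mul]
    simp only [h2, geom_sum_eq hne]
    rw [← pow_mul, mul_comm m, pow_mul, zeta_pow_np1, one_pow, sub_self, zero_div]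


lemma zeta_inv (n : ℕ) : (zeta n)⁻¹ = zeta n ^ n := by
  have h : zeta n * zeta n ^ n = 1 := by rw [← pow_succ', zeta_pow_np1]
  exact inv_eq_of_mul_eq_one_right h

lemma hrel_gu (n : ℕ) : Sg n * Su n = (MvPolynomial.C (zeta n) : Cpoly n) • (Su n * Sg n) := by
  have h := RingQuot.mkAlgHom_rel (Cpoly n) (Srel.gu (n := n))
  simp only [map_mul, AlgHom.commutes] at h
  simpa [Sg, Su, Algebra.smul_def] using h

lemma hrel_gv (n : ℕ) : Sg n * Sv n = (MvPolynomial.C (zeta n ^ n) : Cpoly n) • (Sv n * Sg n) := by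
  have h := RingQuot.mkAlgHom_rel (Cpoly n) (Srel.gv (n := n))
  simp only [map_mul, AlgHom.commutes] at h
  rw [zeta_inv] at h
  simpa [Sg, Sv, Algebra.smul_def] using h

def Dt (n : ℕ) : Salg n :=
  ∑ i ∈ Finset.range (n + 1), (MvPolynomial.X (open Fin.NatCast in (i : Fin (n + 1))) : Cpoly n) • Sg n ^ i

lemma hrel_uv (n : ℕ) : Su n * Sv n = Sv n * Su n + Dt n := by
  have h := RingQuot.mkAlgHom_rel (Cpoly n) (Srel.uv (n := n))
  simp only [map_mul, map_add, map_sum, map_pow, AlgHom.commutes] at h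
  simpa [Su, Sv, Sg, Dt, Algebra.smul_def] using h

lemma hrel_gpow (n : ℕ) : Sg n ^ (n + 1) = 1 := by
  have h := RingQuot.mkAlgHom_rel (Cpoly n) (Srel.gpow (n := n))
  simpa [Sg, map_pow] using h

lemma g_mul_upow (n a : ℕ) :
    Sg n * Su n ^ a = (MvPolynomial.C (zeta n ^ a) : Cpoly n) • (Su n ^ a * Sg n) := by
  induction a with
  | zero => simp
  | succ a ih =>
    rw [pow_succ, ← mul_assoc, ih, smul_mul_assoc, mul_assoc, hrel_gu, mul_smul_comm,
      smul_smul, ← map_mul, ← pow_succ, ← mul_assoc]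

lemma gpow_mul_upow (n j a : ℕ) :
    Sg n ^ j * Su n ^ a = (MvPolynomial.C (zeta n ^ (j * a)) : Cpoly n) • (Su n ^ a * Sg n ^ j) := by
  induction j with
  | zero => simp
  | succ j ih =>
    rw [pow_succ, mul_assoc, g_mul_upow, mul_smul_comm, ← mul_assoc, ih, smul_mul_assoc,
      smul_smul, ← map_mul, ← pow_add, mul_assoc, ← pow_succ]
    ring_nf

lemma g_mul_vpow (n b : ℕ) :
    Sg n * Sv n ^ b = (MvPolynomial.C (zeta n ^ (n * b)) : Cpoly n) • (Sv n ^ b * Sg n) := by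
  induction b with
  | zero => simp
  | succ b ih =>
    rw [pow_succ, ← mul_assoc, ih, smul_mul_assoc, mul_assoc, hrel_gv, mul_smul_comm,
      smul_smul, ← map_mul, ← pow_add, ← mul_assoc, ← pow_succ]
    ring_nf

lemma gpow_mul_vpow (n j b : ℕ) :
    Sg n ^ j * Sv n ^ b =
      (MvPolynomial.C (zeta n ^ (n * j * b)) : Cpoly n) • (Sv n ^ b * Sg n ^ j) := by
  induction j with
  | zero => simp
  | succ j ih =>
    rw [pow_succ, mul_assoc, g_mul_vpow, mul_smul_comm, ← mul_assoc, ih, smul_mul_assoc,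
      smul_smul, ← map_mul, ← pow_add, mul_assoc, ← pow_succ]
    have he : n * b + n * (j * b) = n * (j + 1) * b := by ring
    rw [he, mul_assoc (Sv n ^ b), ← pow_succ]


lemma Se_eq (n m : ℕ) :
    Se n m = (MvPolynomial.C ((n + 1 : ℂ)⁻¹) : Cpoly n) •
      ∑ j ∈ Finset.range (n + 1),
        (MvPolynomial.C (zeta n ^ (m * j)) : Cpoly n) • Sg n ^ j := by
  simp only [Se, Algebra.smul_def, Finset.mul_sum]

lemma Se0_eq (n : ℕ) :
    Se n 0 = (MvPolynomial.C ((n + 1 : ℂ)⁻¹) : Cpoly n) •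
      ∑ j ∈ Finset.range (n + 1), Sg n ^ j := by
  rw [Se_eq]; simp

lemma sum_gpow_shift (n : ℕ) :
    ∑ j ∈ Finset.range (n + 1), Sg n ^ (j + 1) = ∑ j ∈ Finset.range (n + 1), Sg n ^ j := by
  rw [Finset.sum_range_succ (fun j => Sg n ^ (j + 1)) n,
    Finset.sum_range_succ' (fun j => Sg n ^ j) n, hrel_gpow, pow_zero]

lemma Sg_mul_Se0 (n : ℕ) : Sg n * Se n 0 = Se n 0 := by
  rw [Se0_eq, mul_smul_comm, Finset.mul_sum]
  have e1 : ∀ j ∈ Finset.range (n + 1), Sg n * Sg n ^ j = Sg n ^ (j + 1) := fun j _ =>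
    (pow_succ' (Sg n) j).symm
  rw [Finset.sum_congr rfl e1, sum_gpow_shift]

lemma Sgpow_mul_Se0 (n j : ℕ) : Sg n ^ j * Se n 0 = Se n 0 := by
  induction j with
  | zero => simp
  | succ j ih => rw [pow_succ, mul_assoc, Sg_mul_Se0, ih]

lemma Se_mul_Se0 (n m : ℕ) :
    Se n m * Se n 0 = if (n + 1) ∣ m then Se n 0 else 0 := by
  rw [Se_eq n m, smul_mul_assoc, Finset.sum_mul]
  have e1 : ∀ j ∈ Finset.range (n + 1),
      ((MvPolynomial.C (zeta n ^ (m * j)) : Cpoly n) • Sg n ^ j) * Se n 0 =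
        (MvPolynomial.C (zeta n ^ (m * j)) : Cpoly n) • Se n 0 := fun j _ => by
    rw [smul_mul_assoc, Sgpow_mul_Se0]
  rw [Finset.sum_congr rfl e1, ← Finset.sum_smul, smul_smul, ← map_sum, ← map_mul, zeta_sum]
  by_cases hd : (n + 1) ∣ m
  · rw [if_pos hd, if_pos hd, inv_mul_cancel₀ (by
        have : ((n + 1 : ℕ) : ℂ) ≠ 0 := Nat.cast_ne_zero.2 (Nat.succ_ne_zero n)
        simpa using this), map_one, one_smul]
  · rw [if_neg hd, if_neg hd, mul_zero, map_zero, zero_smul]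

lemma he_uv (n a b : ℕ) :
    Se n 0 * (Su n ^ a * Sv n ^ b) = Su n ^ a * Sv n ^ b * Se n (a + n * b) := by
  rw [Se0_eq, Se_eq, smul_mul_assoc, Finset.sum_mul, mul_smul_comm, Finset.mul_sum]
  congr 1
  apply Finset.sum_congr rfl
  intro j hj
  rw [← mul_assoc, gpow_mul_upow, smul_mul_assoc, mul_assoc, gpow_mul_vpow, mul_smul_comm,
    smul_smul, ← map_mul, ← pow_add, mul_smul_comm, ← mul_assoc]
  have he : j * a + n * j * b = (a + n * b) * j := by ring
  rw [he]

lemma he_uv_e (n a b : ℕ) :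
    Se n 0 * (Su n ^ a * Sv n ^ b) * Se n 0 =
      if (n + 1) ∣ (a + n * b) then Su n ^ a * Sv n ^ b * Se n 0 else 0 := by
  rw [he_uv, mul_assoc, Se_mul_Se0, mul_ite, mul_zero]


lemma vSu (n : ℕ) : Sv n * Su n = Su n * Sv n - Dt n := by
  rw [hrel_uv]
  exact (add_sub_cancel_right (Sv n * Su n) (Dt n)).symm

lemma swapA (n : ℕ) (a : ℕ) :
    Su n ^ a * Sv n = Sv n * Su n ^ a +
      ∑ k ∈ Finset.range a, Su n ^ k * Dt n * Su n ^ (a - 1 - k) := by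
  induction a with
  | zero => simp
  | succ a ih =>
    rw [pow_succ', mul_assoc, ih, mul_add, ← mul_assoc, hrel_uv, add_mul, Finset.mul_sum]
    rw [Finset.sum_range_succ' (fun k => Su n ^ k * Dt n * Su n ^ (a + 1 - 1 - k)) a]
    have h1 : ∀ k, Su n * (Su n ^ k * Dt n * Su n ^ (a - 1 - k)) =
        Su n ^ (k + 1) * Dt n * Su n ^ (a + 1 - 1 - (k + 1)) := by
      intro k
      have he : a + 1 - 1 - (k + 1) = a - 1 - k := by omega
      rw [he, ← mul_assoc, ← mul_assoc, ← pow_succ']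
    rw [Finset.sum_congr rfl (fun k _ => h1 k)]
    rw [mul_assoc, ← pow_succ']
    simp only [pow_zero, one_mul, Nat.add_sub_cancel, Nat.sub_zero]
    abel

lemma swapB (n : ℕ) (b : ℕ) :
    Su n * Sv n ^ b = Sv n ^ b * Su n +
      ∑ k ∈ Finset.range b, Sv n ^ k * Dt n * Sv n ^ (b - 1 - k) := by
  induction b with
  | zero => simp
  | succ b ih =>
    rw [pow_succ', ← mul_assoc, hrel_uv, add_mul, mul_assoc, ih, mul_add, Finset.mul_sum]
    rw [Finset.sum_range_succ' (fun k => Sv n ^ k * Dt n * Sv n ^ (b + 1 - 1 - k)) b]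
    have h1 : ∀ k, Sv n * (Sv n ^ k * Dt n * Sv n ^ (b - 1 - k)) =
        Sv n ^ (k + 1) * Dt n * Sv n ^ (b + 1 - 1 - (k + 1)) := by
      intro k
      have he : b + 1 - 1 - (k + 1) = b - 1 - k := by omega
      rw [he, ← mul_assoc, ← mul_assoc, ← pow_succ']
    rw [Finset.sum_congr rfl (fun k _ => h1 k)]
    rw [← mul_assoc, ← pow_succ']
    simp only [pow_zero, one_mul, Nat.add_sub_cancel, Nat.sub_zero]
    abel


def Wset (n : ℕ) : Set (Salg n) := {x | ∃ a b c : ℕ, x = Su n ^ a * (Sv n ^ b * Sg n ^ c)}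

def Tmod (n : ℕ) : Submodule (Cpoly n) (Salg n) := Submodule.span (Cpoly n) (Wset n)

lemma mem_W (n a b c : ℕ) : Su n ^ a * (Sv n ^ b * Sg n ^ c) ∈ Tmod n :=
  Submodule.subset_span ⟨a, b, c, rfl⟩

lemma span_mul_le (n : ℕ) (x : Salg n) (h : ∀ w ∈ Wset n, w * x ∈ Tmod n) :
    ∀ t ∈ Tmod n, t * x ∈ Tmod n := by
  intro t ht
  have hle : Tmod n ≤ Submodule.comap (LinearMap.mulRight (Cpoly n) x) (Tmod n) :=
    Submodule.span_le.2 h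
  exact hle ht

lemma W_mul_g (n : ℕ) : ∀ w ∈ Wset n, w * Sg n ∈ Tmod n := by
  rintro w ⟨a, b, c, rfl⟩
  have : Su n ^ a * (Sv n ^ b * Sg n ^ c) * Sg n = Su n ^ a * (Sv n ^ b * Sg n ^ (c + 1)) := by
    rw [mul_assoc, mul_assoc, ← pow_succ]
  rw [this]; exact mem_W n a b (c + 1)

lemma W_mul_v (n : ℕ) : ∀ w ∈ Wset n, w * Sv n ∈ Tmod n := by
  rintro w ⟨a, b, c, rfl⟩
  have h1 : Sg n ^ c * Sv n = (MvPolynomial.C (zeta n ^ (n * c)) : Cpoly n) • (Sv n * Sg n ^ c) := by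
    have := gpow_mul_vpow n c 1
    simpa using this
  have : Su n ^ a * (Sv n ^ b * Sg n ^ c) * Sv n =
      (MvPolynomial.C (zeta n ^ (n * c)) : Cpoly n) • (Su n ^ a * (Sv n ^ (b + 1) * Sg n ^ c)) := by
    rw [mul_assoc, mul_assoc, h1, mul_smul_comm, mul_smul_comm, ← mul_assoc, ← mul_assoc,
      mul_assoc (Su n ^ a) (Sv n ^ b) (Sv n), ← pow_succ, mul_assoc]
  rw [this]
  exact Submodule.smul_mem _ _ (mem_W n a (b + 1) c)

lemma atomW (n a k i m c : ℕ) : Su n ^ a * (Sv n ^ k * (Sg n ^ i * (Sv n ^ m * Sg n ^ c))) ∈ Tmod n := by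
  have h1 : Sg n ^ i * Sv n ^ m =
      (MvPolynomial.C (zeta n ^ (n * i * m)) : Cpoly n) • (Sv n ^ m * Sg n ^ i) :=
    gpow_mul_vpow n i m
  have : Su n ^ a * (Sv n ^ k * (Sg n ^ i * (Sv n ^ m * Sg n ^ c))) =
      (MvPolynomial.C (zeta n ^ (n * i * m)) : Cpoly n) •
        (Su n ^ a * (Sv n ^ (k + m) * Sg n ^ (i + c))) := by
    rw [show Sg n ^ i * (Sv n ^ m * Sg n ^ c) = (Sg n ^ i * Sv n ^ m) * Sg n ^ c by
        rw [mul_assoc], h1, smul_mul_assoc, mul_smul_comm, mul_smul_comm]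
    congr 1
    rw [pow_add, pow_add]
    simp only [mul_assoc]
  rw [this]
  exact Submodule.smul_mem _ _ (mem_W n a (k + m) (i + c))

lemma W_mul_u (n : ℕ) : ∀ w ∈ Wset n, w * Su n ∈ Tmod n := by
  rintro w ⟨a, b, c, rfl⟩
  have h1 : Sg n ^ c * Su n = (MvPolynomial.C (zeta n ^ c) : Cpoly n) • (Su n * Sg n ^ c) := by
    have := gpow_mul_upow n c 1
    simpa using this
  have key : Su n ^ a * (Sv n ^ b * Sg n ^ c) * Su n =
      (MvPolynomial.C (zeta n ^ c) : Cpoly n) •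
        (Su n ^ a * ((Sv n ^ b * Su n) * Sg n ^ c)) := by
    rw [mul_assoc, mul_assoc, h1, mul_smul_comm, mul_smul_comm]
    congr 1
    rw [← mul_assoc (Sv n ^ b), mul_assoc]
  rw [key]
  apply Submodule.smul_mem
  set X := Su n ^ a * ((Sv n ^ b * Su n) * Sg n ^ c) with hXdef
  set Y := Su n ^ a * ((∑ k ∈ Finset.range b, Sv n ^ k * Dt n * Sv n ^ (b - 1 - k)) * Sg n ^ c)
    with hYdef
  have hY : Y ∈ Tmod n := by
    rw [hYdef, Finset.sum_mul, Finset.mul_sum]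
    apply Submodule.sum_mem
    intro k _
    rw [Dt, Finset.mul_sum, Finset.sum_mul, Finset.sum_mul, Finset.mul_sum]
    apply Submodule.sum_mem
    intro i _
    have e3 : Su n ^ a * (Sv n ^ k * ((MvPolynomial.X (open Fin.NatCast in (i : Fin (n + 1))) : Cpoly n) • Sg n ^ i) *
          Sv n ^ (b - 1 - k) * Sg n ^ c) =
        (MvPolynomial.X (open Fin.NatCast in (i : Fin (n + 1))) : Cpoly n) •
          (Su n ^ a * (Sv n ^ k * (Sg n ^ i * (Sv n ^ (b - 1 - k) * Sg n ^ c)))) := by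
      rw [mul_smul_comm, smul_mul_assoc, smul_mul_assoc, mul_smul_comm]
      congr 1
      simp only [mul_assoc]
    rw [e3]
    exact Submodule.smul_mem _ _ (atomW n a k i (b - 1 - k) c)
  have hsum : X + Y = Su n ^ a * ((Su n * Sv n ^ b) * Sg n ^ c) := by
    rw [hXdef, hYdef, ← mul_add, ← add_mul, ← swapB]
  have hXY : X + Y ∈ Tmod n := by
    rw [hsum]
    have e4 : Su n ^ a * ((Su n * Sv n ^ b) * Sg n ^ c) =
        Su n ^ (a + 1) * (Sv n ^ b * Sg n ^ c) := by
      simp only [← mul_assoc, ← pow_succ]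
    rw [e4]
    exact mem_W n (a + 1) b c
  have hX : X = (X + Y) - Y := (add_sub_cancel_right X Y).symm
  rw [hX]
  exact Submodule.sub_mem (R := Cpoly n) (M := Salg n) (Tmod n) hXY hY


lemma list_mem_T (n : ℕ) (l : List (Salg n))
    (h : ∀ z ∈ l, z ∈ ({Su n, Sv n, Sg n} : Set (Salg n))) : l.prod ∈ Tmod n := by
  induction l using List.reverseRecOn with
  | nil => simpa using mem_W n 0 0 0
  | append_singleton l x ih =>
    rw [List.prod_append, List.prod_singleton]
    have hx := h x (by simp)
    have hl : l.prod ∈ Tmod n := ih (fun z hz => h z (by simp [hz]))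
    rcases hx with hx | hx | hx <;> subst hx
    · exact span_mul_le n _ (W_mul_u n) _ hl
    · exact span_mul_le n _ (W_mul_v n) _ hl
    · exact span_mul_le n _ (W_mul_g n) _ hl

lemma mem_T (n : ℕ) (x : Salg n) : x ∈ Tmod n := by
  obtain ⟨y, rfl⟩ := RingQuot.mkAlgHom_surjective (Cpoly n) (Srel n) x
  have hy : y ∈ Algebra.adjoin (Cpoly n) (Set.range (FreeAlgebra.ι (Cpoly n))) := by
    rw [FreeAlgebra.adjoin_range_ι]; trivial
  have h2 : RingQuot.mkAlgHom (Cpoly n) (Srel n) y ∈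
      (Algebra.adjoin (Cpoly n) (Set.range (FreeAlgebra.ι (Cpoly n)))).map
        (RingQuot.mkAlgHom (Cpoly n) (Srel n)) := ⟨y, hy, rfl⟩
  rw [AlgHom.map_adjoin] at h2
  have h3 : RingQuot.mkAlgHom (Cpoly n) (Srel n) ''
      Set.range (FreeAlgebra.ι (Cpoly n)) ⊆ ({Su n, Sv n, Sg n} : Set (Salg n)) := by
    rintro z ⟨w, ⟨i, rfl⟩, rfl⟩
    fin_cases i
    · left; rfl
    · right; left; rfl
    · right; right; rfl
  have h4 := Algebra.adjoin_mono h3 h2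
  have h5 : RingQuot.mkAlgHom (Cpoly n) (Srel n) y ∈
      Submodule.span (Cpoly n) (Submonoid.closure ({Su n, Sv n, Sg n} : Set (Salg n)) : Set (Salg n)) := by
    rw [← Algebra.adjoin_eq_span]; exact h4
  refine Submodule.span_le.2 ?_ h5
  intro w hw
  obtain ⟨l, hl, rfl⟩ := Submonoid.exists_list_of_mem_closure hw
  exact list_mem_T n l hl


lemma Se0_mul_Se0 (n : ℕ) : Se n 0 * Se n 0 = Se n 0 := by
  have := Se_mul_Se0 n 0
  simpa using this

def Mmod (n : ℕ) : Submodule (Cpoly n) (Salg n) :=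
  Submodule.span (Cpoly n)
    { m : Salg n | ∃ L : List (Salg n),
        (∀ w ∈ L, w = Se n 0 * Su n ^ (n + 1) * Se n 0 ∨
                  w = Se n 0 * Sv n ^ (n + 1) * Se n 0 ∨
                  w = Se n 0 * (Su n * Sv n) * Se n 0) ∧
        m = Se n 0 * L.prod }

lemma e_mem_M (n : ℕ) : Se n 0 ∈ Mmod n :=
  Submodule.subset_span ⟨[], by simp, by simp⟩

lemma gen_mul_M (n : ℕ) (G : Salg n)
    (hG : G = Se n 0 * Su n ^ (n + 1) * Se n 0 ∨
          G = Se n 0 * Sv n ^ (n + 1) * Se n 0 ∨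
          G = Se n 0 * (Su n * Sv n) * Se n 0) :
    ∀ t ∈ Mmod n, G * t ∈ Mmod n := by
  have hGe : G * Se n 0 = G := by
    rcases hG with h | h | h <;> subst h <;> rw [mul_assoc, Se0_mul_Se0]
  have heG : Se n 0 * G = G := by
    rcases hG with h | h | h <;> subst h <;> rw [← mul_assoc, ← mul_assoc, Se0_mul_Se0]
  intro t ht
  have hle : Mmod n ≤ Submodule.comap (LinearMap.mulLeft (Cpoly n) G) (Mmod n) := by
    apply Submodule.span_le.2
    rintro m ⟨L, hL, rfl⟩
    show G * (Se n 0 * L.prod) ∈ Mmod n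
    have hcs : G * (Se n 0 * L.prod) = Se n 0 * (G :: L).prod := by
      rw [List.prod_cons, ← mul_assoc, hGe, ← mul_assoc, heG]
    rw [hcs]
    refine Submodule.subset_span ⟨G :: L, ?_, rfl⟩
    intro w hw
    rcases List.mem_cons.1 hw with rfl | hw'
    · exact hG
    · exact hL w hw'
  exact hle ht

lemma etrans (n a b : ℕ) (hd : (n + 1) ∣ (a + n * b)) :
    Se n 0 * (Su n ^ a * Sv n ^ b) * Se n 0 = Su n ^ a * Sv n ^ b * Se n 0 := by
  rw [he_uv_e, if_pos hd]

lemma push_g (n i c m : ℕ) :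
    Sg n ^ i * (Su n ^ c * (Sv n ^ m * Se n 0)) =
      (MvPolynomial.C (zeta n ^ (i * c) * zeta n ^ (n * i * m)) : Cpoly n) •
        (Su n ^ c * (Sv n ^ m * Se n 0)) := by
  rw [← mul_assoc (Sg n ^ i) (Su n ^ c), gpow_mul_upow, smul_mul_assoc, mul_assoc (Su n ^ c),
    ← mul_assoc (Sg n ^ i) (Sv n ^ m), gpow_mul_vpow, smul_mul_assoc, mul_smul_comm, smul_smul,
    ← map_mul, mul_assoc (Sv n ^ m), Sgpow_mul_Se0]

lemma corr_term (n a' m k i : ℕ) (hk : k < a') :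
    Su n * ((Su n ^ k * Sg n ^ i * Su n ^ (a' - 1 - k)) * (Sv n ^ m * Se n 0)) =
      (MvPolynomial.C (zeta n ^ (i * (a' - 1 - k)) * zeta n ^ (n * i * m)) : Cpoly n) •
        (Su n ^ a' * (Sv n ^ m * Se n 0)) := by
  have hval : Su n * (Su n ^ k * (Su n ^ (a' - 1 - k) * (Sv n ^ m * Se n 0))) =
      Su n ^ a' * (Sv n ^ m * Se n 0) := by
    rw [← mul_assoc (Su n) (Su n ^ k), ← pow_succ', ← mul_assoc (Su n ^ (k + 1)), ← pow_add]
    have hkk : k + 1 + (a' - 1 - k) = a' := by omega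
    rw [hkk]
  rw [mul_assoc (Su n ^ k * Sg n ^ i) (Su n ^ (a' - 1 - k)), mul_assoc (Su n ^ k) (Sg n ^ i),
    push_g, mul_smul_comm, mul_smul_comm, hval]

lemma emain (n : ℕ) (N : ℕ) : ∀ a b : ℕ, a + b ≤ N →
    Se n 0 * (Su n ^ a * Sv n ^ b) * Se n 0 ∈ Mmod n := by
  induction N with
  | zero =>
    intro a b h
    have ha : a = 0 := by omega
    have hb : b = 0 := by omega
    subst ha; subst hb
    have : Se n 0 * (Su n ^ 0 * Sv n ^ 0) * Se n 0 = Se n 0 := by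
      simp only [pow_zero, mul_one, one_mul]
      exact Se0_mul_Se0 n
    rw [this]; exact e_mem_M n
  | succ N ih =>
    intro a b hab
    by_cases hd : (n + 1) ∣ (a + n * b)
    · rcases a with _ | a' <;> rcases b with _ | m
      · -- a = 0, b = 0
        have : Se n 0 * (Su n ^ 0 * Sv n ^ 0) * Se n 0 = Se n 0 := by
          simp only [pow_zero, mul_one, one_mul]
          exact Se0_mul_Se0 n
        rw [this]; exact e_mem_M n
      · -- a = 0, b = m + 1 : y-case
        set B := m + 1 with hB
        have hco : Nat.Coprime (n + 1) n := by
          simpa using Nat.coprime_succ_self n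
        have hdB : (n + 1) ∣ B := hco.dvd_of_dvd_mul_left (by simpa using hd)
        have hBge : n + 1 ≤ B := Nat.le_of_dvd (Nat.succ_pos m) hdB
        set B' := B - (n + 1) with hB'
        have hdB' : (n + 1) ∣ B' := Nat.dvd_sub hdB dvd_rfl
        have hd' : (n + 1) ∣ (0 + n * B') := by
          simpa using hdB'.mul_left n
        have h2 : Se n 0 * (Su n ^ 0 * Sv n ^ B') * Se n 0 ∈ Mmod n := ih 0 B' (by omega)
        have hGy : Se n 0 * Sv n ^ (n + 1) * Se n 0 = Sv n ^ (n + 1) * Se n 0 := by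
          have := etrans n 0 (n + 1) ⟨n, by ring⟩
          simpa using this
        have h4 : Se n 0 * (Sv n ^ B' * Se n 0) = Sv n ^ B' * Se n 0 := by
          have h := etrans n 0 B' hd'
          simp only [pow_zero, one_mul] at h
          rw [← mul_assoc]; exact h
        have h3 : Se n 0 * (Su n ^ 0 * Sv n ^ B) * Se n 0 =
            (Se n 0 * Sv n ^ (n + 1) * Se n 0) * (Se n 0 * (Su n ^ 0 * Sv n ^ B') * Se n 0) := by
          rw [etrans n 0 B hd, etrans n 0 B' hd', hGy]
          simp only [pow_zero, one_mul]
          rw [mul_assoc (Sv n ^ (n + 1)), h4, ← mul_assoc, ← pow_add]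
          have hBB : n + 1 + B' = B := by omega
          rw [hBB]
        rw [h3]
        exact gen_mul_M n _ (Or.inr (Or.inl rfl)) _ h2
      · -- a = a' + 1, b = 0 : x-case
        set A := a' + 1 with hA
        have hdA : (n + 1) ∣ A := by simpa using hd
        have hAge : n + 1 ≤ A := Nat.le_of_dvd (Nat.succ_pos a') hdA
        set A' := A - (n + 1) with hA'
        have hdA' : (n + 1) ∣ A' := Nat.dvd_sub hdA dvd_rfl
        have hd' : (n + 1) ∣ (A' + n * 0) := by simpa using hdA'
        have h2 : Se n 0 * (Su n ^ A' * Sv n ^ 0) * Se n 0 ∈ Mmod n := ih A' 0 (by omega)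
        have hGx : Se n 0 * Su n ^ (n + 1) * Se n 0 = Su n ^ (n + 1) * Se n 0 := by
          have := etrans n (n + 1) 0 (by simp)
          simpa using this
        have h4 : Se n 0 * (Su n ^ A' * Se n 0) = Su n ^ A' * Se n 0 := by
          have h := etrans n A' 0 hd'
          simp only [pow_zero, mul_one] at h
          rw [← mul_assoc]; exact h
        have h3 : Se n 0 * (Su n ^ A * Sv n ^ 0) * Se n 0 =
            (Se n 0 * Su n ^ (n + 1) * Se n 0) * (Se n 0 * (Su n ^ A' * Sv n ^ 0) * Se n 0) := by
          rw [etrans n A 0 hd, etrans n A' 0 hd', hGx]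
          simp only [pow_zero, mul_one]
          rw [mul_assoc (Su n ^ (n + 1)), h4, ← mul_assoc, ← pow_add]
          have hAA : n + 1 + A' = A := by omega
          rw [hAA]
        rw [h3]
        exact gen_mul_M n _ (Or.inl rfl) _ h2
      · -- a = a' + 1, b = m + 1 : z-case
        have hrw : a' + 1 + n * (m + 1) = (n + 1) + (a' + n * m) := by ring
        have hd' : (n + 1) ∣ (a' + n * m) := by
          rw [hrw] at hd
          exact (Nat.dvd_add_right dvd_rfl).mp hd
        have hIH : Se n 0 * (Su n ^ a' * Sv n ^ m) * Se n 0 ∈ Mmod n := ih a' m (by omega)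
        have hmid : Se n 0 * (Su n ^ a' * (Sv n ^ m * Se n 0)) = Su n ^ a' * (Sv n ^ m * Se n 0) := by
          have h := etrans n a' m hd'
          simp only [mul_assoc] at h
          exact h
        have hGz : Se n 0 * (Su n * Sv n) * Se n 0 = Su n * (Sv n * Se n 0) := by
          have := etrans n 1 1 ⟨1, by ring⟩
          simp only [pow_one, mul_assoc] at this ⊢
          exact this
        -- decompose
        have hsplit : Se n 0 * (Su n ^ (a' + 1) * Sv n ^ (m + 1)) * Se n 0 =
            Su n * ((Sv n * Su n ^ a' +
              ∑ k ∈ Finset.range a', Su n ^ k * Dt n * Su n ^ (a' - 1 - k)) *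
                (Sv n ^ m * Se n 0)) := by
          rw [etrans n (a' + 1) (m + 1) hd, ← swapA]
          rw [pow_succ', pow_succ' (Sv n) m]
          simp only [mul_assoc]
        rw [hsplit, add_mul, mul_add]
        apply Submodule.add_mem
        · -- main term = G_z * (e (u^{a'} v^m) e)
          have hmain : Su n * (Sv n * Su n ^ a' * (Sv n ^ m * Se n 0)) =
              (Se n 0 * (Su n * Sv n) * Se n 0) * (Se n 0 * (Su n ^ a' * Sv n ^ m) * Se n 0) := by
            rw [hGz, etrans n a' m hd']
            simp only [mul_assoc]
            rw [hmid]
          rw [hmain]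
          exact gen_mul_M n _ (Or.inr (Or.inr rfl)) _ hIH
        · -- correction terms
          rw [Finset.sum_mul, Finset.mul_sum]
          apply Submodule.sum_mem
          intro k hk
          have hk' : k < a' := Finset.mem_range.1 hk
          rw [Dt, Finset.mul_sum, Finset.sum_mul, Finset.sum_mul, Finset.mul_sum]
          apply Submodule.sum_mem
          intro i _
          rw [mul_smul_comm, smul_mul_assoc, smul_mul_assoc, mul_smul_comm,
            corr_term n a' m k i hk']
          apply Submodule.smul_mem
          apply Submodule.smul_mem
          have h9 : Se n 0 * (Su n ^ a' * Sv n ^ m) * Se n 0 =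
              Su n ^ a' * (Sv n ^ m * Se n 0) := by
            rw [etrans n a' m hd', mul_assoc]
          rw [← h9]
          exact hIH
    · rw [he_uv_e, if_neg hd]
      exact Submodule.zero_mem _


theorem stmt13 (n : ℕ) (hn : 1 ≤ n) :
    ∀ a : Salg n, Se n 0 * a * Se n 0 ∈
      Submodule.span (Cpoly n)
        { m : Salg n | ∃ L : List (Salg n),
            (∀ w ∈ L, w = Se n 0 * Su n ^ (n + 1) * Se n 0 ∨
                      w = Se n 0 * Sv n ^ (n + 1) * Se n 0 ∨
                      w = Se n 0 * (Su n * Sv n) * Se n 0) ∧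
            m = Se n 0 * L.prod } := by
  intro a
  have hT := mem_T n a
  have hle : Tmod n ≤ Submodule.comap
      ((LinearMap.mulRight (Cpoly n) (Se n 0)).comp (LinearMap.mulLeft (Cpoly n) (Se n 0)))
      (Mmod n) := by
    apply Submodule.span_le.2
    rintro w ⟨A, B, Cc, rfl⟩
    show Se n 0 * (Su n ^ A * (Sv n ^ B * Sg n ^ Cc)) * Se n 0 ∈ Mmod n
    have h7 : Se n 0 * (Su n ^ A * (Sv n ^ B * Sg n ^ Cc)) * Se n 0 =
        Se n 0 * (Su n ^ A * Sv n ^ B) * Se n 0 := by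
      rw [mul_assoc (Se n 0), mul_assoc (Su n ^ A) _ (Se n 0), mul_assoc (Sv n ^ B),
        Sgpow_mul_Se0, ← mul_assoc (Su n ^ A), ← mul_assoc (Se n 0)]
    rw [h7]
    exact emain n (A + B) A B le_rfl
  exact hle hT


end
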